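/- arXiv:1508.02640 — 3 statements merged into one kernel-verified Lean document; each statement's English description precedes it below -/
import Mathlib

section
/- Let b > 0 and σ ∈ ℝ, let Q : ℝ → ℝ be continuously differentiable with Q(τ) > 0 for all τ ∈ [−b,b], and let R : ℝ → ℝ be continuous. Define the momentum profile φ : ℝ → ℝ by φ(τ) := (1/Q(τ)) · (2(τ+b)·Q(−b) − 2·∫_{−b}^{τ} (σ − R(x))·(τ−x)·Q(x) dx). Then φ(−b) = 0, φ is differentiable at −b with φ′(−b) = 2, and for every τ ∈ [−b,b] one has R(τ) − (1/(2·Q(τ)))·(φ·Q)″(τ) = σ, where (φ·Q)″ denotes the second derivative of the product φ·Q. -/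
/-!
Where `Q ≠ 0`, the product `φ·Q` is the numerator
`N(τ) = 2(τ+b)Q(−b) − 2∫_{−b}^{τ} (τ−x)(σ−R(x))Q(x) dx`. The integral term is the iterated
antiderivative of `(σ − R)Q` vanishing to first order at `−b`, so `N″ = −2(σ − R)Q`, which is
exactly the cscK equation. Moreover `N(−b) = 0` and `N′(−b) = 2Q(−b)`, whence `φ(−b) = 0` and
`φ′(−b) = N′(−b)/Q(−b) = 2`.
-/

open intervalIntegral

/-- The momentum profile
`φ(τ) = (1/Q(τ)) · (2(τ+b)·Q(−b) − 2∫_{−b}^{τ} (σ − R(x))(τ−x)Q(x) dx)`. -/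
noncomputable def momentumProfile (b σ : ℝ) (Q R : ℝ → ℝ) : ℝ → ℝ := fun τ =>
  (1 / Q τ) * (2 * (τ + b) * Q (-b) - 2 * ∫ x in (-b)..τ, (σ - R x) * (τ - x) * Q x)

open Topology

theorem hasDerivAt_integral_sub_mul {g : ℝ → ℝ} (hg : Continuous g) (a τ : ℝ) :
    HasDerivAt (fun t => ∫ x in a..t, (t - x) * g x) (∫ x in a..τ, g x) τ := by
  have hxg : Continuous fun x => x * g x := continuous_id.mul hg
  have hsplit : (fun t => ∫ x in a..t, (t - x) * g x) =
      fun t => t * (∫ x in a..t, g x) - ∫ x in a..t, x * g x := by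
    funext t
    simp_rw [sub_mul]
    rw [integral_sub ((hg.intervalIntegrable _ _).const_mul t) (hxg.intervalIntegrable _ _),
      integral_const_mul]
  rw [hsplit]
  refine (((hasDerivAt_id' τ).fun_mul (hg.integral_hasStrictDerivAt a τ).hasDerivAt).fun_sub
    (hxg.integral_hasStrictDerivAt a τ).hasDerivAt).congr_deriv ?_
  ring

namespace momentumProfile

noncomputable def numerator (b σ : ℝ) (Q R : ℝ → ℝ) (τ : ℝ) : ℝ :=
  2 * (τ + b) * Q (-b) - 2 * ∫ x in (-b)..τ, (σ - R x) * (τ - x) * Q x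

variable (b σ : ℝ) {Q R : ℝ → ℝ}

theorem eq_div_mul_numerator (τ : ℝ) :
    momentumProfile b σ Q R τ = (1 / Q τ) * numerator b σ Q R τ :=
  rfl

theorem numerator_neg : numerator b σ Q R (-b) = 0 := by
  simp [numerator]

theorem mul_eventuallyEq_numerator {τ : ℝ} (hQ : ContinuousAt Q τ) (hτ : Q τ ≠ 0) :
    (fun t => momentumProfile b σ Q R t * Q t) =ᶠ[𝓝 τ] numerator b σ Q R := by
  filter_upwards [hQ.eventually_ne hτ] with t ht
  rw [eq_div_mul_numerator]
  field_simp

theorem hasDerivAt_numerator (hQ : Continuous Q) (hR : Continuous R) (τ : ℝ) :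
    HasDerivAt (numerator b σ Q R)
      (2 * Q (-b) - 2 * ∫ x in (-b)..τ, (σ - R x) * Q x) τ := by
  have hintegrand : ∀ t x : ℝ, (σ - R x) * (t - x) * Q x = (t - x) * ((σ - R x) * Q x) :=
    fun _ _ => by ring
  have hlinear : HasDerivAt (fun t : ℝ => 2 * (t + b) * Q (-b)) (2 * Q (-b)) τ := by
    simpa using (((hasDerivAt_id τ).add_const b).const_mul 2).mul_const (Q (-b))
  unfold numerator
  simp_rw [hintegrand]
  exact hlinear.sub
    ((hasDerivAt_integral_sub_mul ((continuous_const.sub hR).mul hQ) (-b) τ).const_mul 2)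

theorem deriv_deriv_numerator (hQ : Continuous Q) (hR : Continuous R) (τ : ℝ) :
    deriv (deriv (numerator b σ Q R)) τ = -2 * ((σ - R τ) * Q τ) := by
  have hg : Continuous fun x => (σ - R x) * Q x := (continuous_const.sub hR).mul hQ
  rw [funext fun t => (hasDerivAt_numerator b σ hQ hR t).deriv]
  convert ((hg.integral_hasStrictDerivAt (-b) τ).hasDerivAt.const_mul 2).const_sub
    (2 * Q (-b)) |>.deriv using 1
  ring

theorem apply_neg : momentumProfile b σ Q R (-b) = 0 := by
  simp [eq_div_mul_numerator, numerator_neg]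

theorem hasDerivAt_neg (hQ : Continuous Q) (hQd : DifferentiableAt ℝ Q (-b)) (hR : Continuous R)
    (hQb : Q (-b) ≠ 0) : HasDerivAt (momentumProfile b σ Q R) 2 (-b) := by
  have hφ : momentumProfile b σ Q R = fun τ => (Q τ)⁻¹ * numerator b σ Q R τ :=
    funext fun τ => by rw [eq_div_mul_numerator, one_div]
  rw [hφ]
  refine ((hQd.hasDerivAt.fun_inv hQb).fun_mul
    (hasDerivAt_numerator b σ hQ hR (-b))).congr_deriv ?_
  simp only [numerator_neg, integral_same]
  field_simp
  ring

theorem scalarCurvature_eq (hQ : Continuous Q) (hR : Continuous R) {τ : ℝ} (hτ : Q τ ≠ 0) :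
    R τ - (1 / (2 * Q τ)) * deriv (deriv (fun t => momentumProfile b σ Q R t * Q t)) τ = σ := by
  rw [(mul_eventuallyEq_numerator b σ hQ.continuousAt hτ).deriv.deriv_eq, deriv_deriv_numerator b σ hQ hR]
  field_simp
  ring

end momentumProfile

/-- The momentum profile satisfies `φ(−b) = 0`, `φ′(−b) = 2`, and solves
the cscK equation `R(τ) − (φQ)″(τ)/(2Q(τ)) = σ` on `[−b,b]`. -/
theorem momentumProfile_solves_cscK (b σ : ℝ) (hb : 0 < b) (Q R : ℝ → ℝ)
    (hQ : ContDiff ℝ 1 Q) (hR : Continuous R)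
    (hQpos : ∀ τ ∈ Set.Icc (-b) b, 0 < Q τ) :
    momentumProfile b σ Q R (-b) = 0 ∧
    HasDerivAt (momentumProfile b σ Q R) 2 (-b) ∧
    (∀ τ ∈ Set.Icc (-b) b,
      R τ - (1 / (2 * Q τ)) *
        deriv (deriv (fun t => momentumProfile b σ Q R t * Q t)) τ = σ) := by
  have hQb : Q (-b) ≠ 0 := (hQpos (-b) ⟨le_rfl, by linarith⟩).ne'
  exact ⟨momentumProfile.apply_neg b σ,
    momentumProfile.hasDerivAt_neg b σ hQ.continuous
      (hQ.differentiable one_ne_zero (-b)) hR hQb,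
    fun τ hτ => momentumProfile.scalarCurvature_eq b σ hQ.continuous hR (hQpos τ hτ).ne'⟩
end

section
/- Let b ∈ ℝ and β > 0, and let φ : ℝ → ℝ be real-analytic on a neighbourhood of b with φ(b) = 0 and φ′(b) = −2β. Let t₀ ∈ ℝ and suppose τ : (t₀, ∞) → ℝ is differentiable with τ(t) < b for all t > t₀, τ′(t) = φ(τ(t)) for all t > t₀, and τ(t) → b as t → ∞. Then there exists a real number L > 0 such that e^{2βt}·(b − τ(t)) → L as t → ∞. -/
/-!
Write `u = b - τ > 0`. Since `φ b = 0`, the ODE reads `u' = r u` with `r = dslope φ b ∘ τ`, and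
`dslope φ b` is analytic at `b` with value `φ' b = -2β`, so `r → -2β` and `r + 2β = O(τ - b) = O(u)`.
Eventually `r ≤ -β`, whence `u = O(e^{-βt})`; so `r + 2β`, the derivative of `log u + 2βt`, is
integrable at `+∞`, and `log u + 2βt` converges to some `l`, giving `e^{2βt} u → e^l`.
-/

open Filter Asymptotics MeasureTheory Set Topology

section Dslope

variable {𝕜 E : Type*} [NontriviallyNormedField 𝕜] [NormedAddCommGroup E] [NormedSpace 𝕜 E]
  {f : 𝕜 → E} {a : 𝕜}

theorem AnalyticAt.dslope (hf : AnalyticAt 𝕜 f a) :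
    AnalyticAt 𝕜 (dslope f a) a :=
  let ⟨_, hp⟩ := hf
  ⟨_, hp.has_fpower_series_dslope_fslope⟩

theorem AnalyticAt.isBigO_dslope_sub_deriv (hf : AnalyticAt 𝕜 f a) :
    (fun x => _root_.dslope f a x - deriv f a) =O[𝓝 a] fun x => x - a := by
  simpa only [dslope_same] using hf.dslope.differentiableAt.isBigO_sub

end Dslope

theorem exists_tendsto_of_hasDerivAt_of_isBigO {E F : Type*} [NormedAddCommGroup E]
    [NormedSpace ℝ E] [CompleteSpace E] [NormedAddCommGroup F] {v v' : ℝ → E} {g : ℝ → F}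
    {t₀ : ℝ} (hv : ∀ t > t₀, HasDerivAt v (v' t) t) (hv' : v' =O[atTop] g)
    (hg : IntegrableAtFilter g atTop) : ∃ l, Tendsto v atTop (𝓝 l) := by
  have hmeas : StronglyMeasurableAtFilter v' atTop := by
    refine ⟨Ioi t₀, Ioi_mem_atTop t₀, (stronglyMeasurable_deriv v).aestronglyMeasurable.congr ?_⟩
    exact (ae_restrict_mem measurableSet_Ioi).mono fun t ht => (hv t ht).deriv
  obtain ⟨s, hs, hint⟩ := hv'.integrableAtFilter hmeas hg
  obtain ⟨a, ha⟩ := mem_atTop_sets.1 hs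
  refine ⟨_, tendsto_limUnder_of_hasDerivAt_of_integrableOn_Ioi (a := max a t₀)
    (fun t ht => hv t (lt_of_le_of_lt (le_max_right _ _) ht)) (hint.mono_set fun t ht => ?_)⟩
  exact ha t (le_of_lt (lt_of_le_of_lt (le_max_left _ _) ht))

section LogDeriv

variable {u r : ℝ → ℝ} {t₀ : ℝ}

theorem hasDerivAt_log_add_mul_of_hasDerivAt_mul (hu : ∀ t > t₀, 0 < u t)
    (hderiv : ∀ t > t₀, HasDerivAt u (r t * u t) t) (c : ℝ) {t : ℝ} (ht : t₀ < t) :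
    HasDerivAt (fun s => Real.log (u s) + c * s) (r t + c) t := by
  have hlog := (hderiv t ht).log (hu t ht).ne'
  rw [mul_div_cancel_right₀ _ (hu t ht).ne'] at hlog
  exact hlog.add (by simpa using (hasDerivAt_id t).const_mul c)

theorem isBigO_exp_of_hasDerivAt_mul_of_le (hu : ∀ t > t₀, 0 < u t)
    (hderiv : ∀ t > t₀, HasDerivAt u (r t * u t) t) {c : ℝ} (hr : ∀ᶠ t in atTop, r t ≤ -c) :
    u =O[atTop] fun t => Real.exp (-c * t) := by
  obtain ⟨t₁, ht₁⟩ := (hr.and (eventually_gt_atTop t₀)).exists_forall_of_atTop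
  set w := fun s => Real.log (u s) + c * s
  have hw : ∀ t ∈ Ici t₁, HasDerivAt w (r t + c) t := fun t ht =>
    hasDerivAt_log_add_mul_of_hasDerivAt_mul hu hderiv c (ht₁ t ht).2
  have hanti : AntitoneOn w (Ici t₁) := by
    refine antitoneOn_of_hasDerivWithinAt_nonpos (convex_Ici t₁)
      (fun t ht => (hw t ht).continuousAt.continuousWithinAt)
      (fun t ht => (hw t (interior_subset ht)).hasDerivWithinAt) fun t ht => ?_
    linarith [(ht₁ t (interior_subset ht)).1]
  refine IsBigO.of_bound (Real.exp (w t₁)) ?_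
  filter_upwards [eventually_ge_atTop t₁] with t ht
  have hut : u t = Real.exp (w t) * Real.exp (-c * t) := by
    rw [← Real.exp_add, neg_mul, add_neg_cancel_right, Real.exp_log (hu t (ht₁ t ht).2)]
  rw [Real.norm_eq_abs, Real.norm_eq_abs, abs_of_pos (Real.exp_pos _), hut,
    abs_of_pos (by positivity)]
  gcongr
  exact hanti self_mem_Ici ht ht

theorem exists_tendsto_exp_mul_of_hasDerivAt_mul {F : Type*} [NormedAddCommGroup F]
    (hu : ∀ t > t₀, 0 < u t) (hderiv : ∀ t > t₀, HasDerivAt u (r t * u t) t) {c : ℝ}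
    {g : ℝ → F} (hr : (fun t => r t + c) =O[atTop] g) (hg : IntegrableAtFilter g atTop) :
    ∃ L > 0, Tendsto (fun t => Real.exp (c * t) * u t) atTop (𝓝 L) := by
  obtain ⟨l, hl⟩ := exists_tendsto_of_hasDerivAt_of_isBigO
    (fun t ht => hasDerivAt_log_add_mul_of_hasDerivAt_mul hu hderiv c ht) hr hg
  refine ⟨Real.exp l, Real.exp_pos l, (Real.continuous_exp.tendsto l |>.comp hl).congr' ?_⟩
  filter_upwards [eventually_gt_atTop t₀] with t ht
  simp [Real.exp_add, Real.exp_log (hu t ht), mul_comm]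

end LogDeriv

/-- If the moment map coordinate `τ` solves `τ′ = φ(τ)` with `τ < b`,
`τ → b` at infinity, and `φ` is real-analytic at `b` with `φ(b) = 0`, `φ′(b) = −2β`,
then `b − τ(t)` decays exactly like a positive constant times `e^{−2βt}`. -/
theorem moment_map_exponential_decay (b β : ℝ) (hβ : 0 < β) (φ : ℝ → ℝ)
    (hφ : AnalyticAt ℝ φ b) (hφb : φ b = 0) (hφ' : deriv φ b = -2 * β)
    (t₀ : ℝ) (τ : ℝ → ℝ)
    (hlt : ∀ t > t₀, τ t < b)
    (hode : ∀ t > t₀, HasDerivAt τ (φ (τ t)) t)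
    (hlim : Tendsto τ atTop (nhds b)) :
    ∃ L > 0, Tendsto (fun t => Real.exp (2 * β * t) * (b - τ t)) atTop (nhds L) := by
  set r := fun t => dslope φ b (τ t)
  have hu : ∀ t > t₀, 0 < b - τ t := fun t ht => sub_pos.2 (hlt t ht)
  have hderiv : ∀ t > t₀, HasDerivAt (fun s => b - τ s) (r t * (b - τ t)) t := by
    intro t ht
    refine ((hode t ht).const_sub b).congr_deriv ?_
    have := sub_smul_dslope φ b (τ t)
    rw [smul_eq_mul, hφb, sub_zero] at this
    rw [← this]
    ring
  have hr : Tendsto r atTop (𝓝 (-2 * β)) := by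
    have := hφ.dslope.continuousAt.tendsto.comp hlim
    rwa [dslope_same, hφ'] at this
  have hr_sub : (fun t => r t + 2 * β) =O[atTop] fun t => b - τ t := by
    rw [← isBigO_neg_right]
    exact (hφ.isBigO_dslope_sub_deriv.comp_tendsto hlim).congr (fun t => by simp [r, hφ'])
      fun t => by simp
  have hu_exp := isBigO_exp_of_hasDerivAt_mul_of_le hu hderiv
    (hr.eventually (eventually_le_nhds (by linarith : -2 * β < -β)))
  exact exists_tendsto_exp_mul_of_hasDerivAt_mul hu hderiv (hr_sub.trans hu_exp)
    ⟨Ioi 0, Ioi_mem_atTop 0, exp_neg_integrableOn_Ioi 0 hβ⟩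
end

section
/- Let b > 0 and let Q, R : ℝ → ℝ be real-analytic on an open interval containing [−b,b], with Q(τ) > 0 for all τ ∈ [−b,b]. Then there exists exactly one pair (σ, φ) consisting of a real number σ and a function φ : ℝ → ℝ that is twice continuously differentiable on [−b,b], such that: (i) R(τ) − (1/(2·Q(τ)))·(φ·Q)″(τ) = σ for every τ ∈ [−b,b]; (ii) φ(−b) = 0 and φ′(−b) = 2; and (iii) φ(b) = 0. Moreover this φ is real-analytic on a neighbourhood of [−b,b]. -/
/-!
Writing `v = φ Q`, the equation says `v″ = 2Q(R - σ)`, so on `[-b, b]` the profile is determined by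
`σ` and the data `v(-b) = 0`, `v′(-b) = 2Q(-b)`: it is their double integral. The value `v(b)` is
affine in `σ` with slope `-∫∫ 2Q < 0`, so the condition `φ(b) = 0` singles out exactly one `σ`.
Analyticity survives the two integrations because a primitive of a real-analytic function is
real-analytic: it agrees with the termwise antiderivative of the power series.
-/

open Set Filter Topology

namespace FormalMultilinearSeries

variable {𝕜 : Type*} [RCLike 𝕜]

noncomputable def antiderivCoeff (p : FormalMultilinearSeries 𝕜 𝕜 𝕜) (C : 𝕜) : ℕ → 𝕜
  | 0 => C
  | k + 1 => p.coeff k / (k + 1)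

noncomputable def antideriv (p : FormalMultilinearSeries 𝕜 𝕜 𝕜) (C : 𝕜) :
    FormalMultilinearSeries 𝕜 𝕜 𝕜 :=
  ofScalars 𝕜 (p.antiderivCoeff C)

variable (p : FormalMultilinearSeries 𝕜 𝕜 𝕜) (C : 𝕜)

theorem norm_antiderivCoeff_succ_le (k : ℕ) : ‖p.antiderivCoeff C (k + 1)‖ ≤ ‖p k‖ := by
  rw [antiderivCoeff, norm_div, norm_apply_eq_norm_coef]
  refine div_le_self (norm_nonneg _) ?_
  rw [← Nat.cast_succ, RCLike.norm_natCast]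
  exact_mod_cast Nat.succ_pos k

theorem radius_le_radius_antideriv : p.radius ≤ (p.antideriv C).radius := by
  refine ENNReal.le_of_forall_nnreal_lt fun ρ hρ => ?_
  obtain ⟨M, -, hM⟩ := p.norm_mul_pow_le_of_lt_radius hρ
  refine le_radius_of_bound _ (max ‖C‖ (M * ρ)) fun n => ?_
  rw [antideriv, ofScalars_norm]
  cases n with
  | zero => simp [antiderivCoeff]
  | succ k =>
    calc ‖p.antiderivCoeff C (k + 1)‖ * (ρ : ℝ) ^ (k + 1) ≤ ‖p k‖ * ρ ^ k * ρ := by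
          rw [pow_succ, ← mul_assoc]
          gcongr
          exact p.norm_antiderivCoeff_succ_le C k
      _ ≤ M * ρ := by gcongr; exact hM k
      _ ≤ _ := le_max_right _ _

theorem sum_antideriv_zero : (p.antideriv C).sum 0 = C :=
  (ofScalarsSum_zero (E := 𝕜) (p.antiderivCoeff C)).trans (by simp [antiderivCoeff])

theorem hasDerivAt_sum_antideriv {y : 𝕜} (hy : ‖y‖ₑ < p.radius) :
    HasDerivAt (p.antideriv C).sum (p.sum y) y := by
  have hq : ‖y‖ₑ < (p.antideriv C).radius := hy.trans_le (p.radius_le_radius_antideriv C)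
  have hq' : y ∈ Metric.eball 0 (p.antideriv C).derivSeries.radius := by
    simpa using hq.trans_le (radius_le_radius_derivSeries _)
  have hsum := ((p.antideriv C).derivSeries.hasSum hq').mapL (ContinuousLinearMap.apply 𝕜 𝕜 1)
  have hterm : ∀ n, (ContinuousLinearMap.apply 𝕜 𝕜 1) ((p.antideriv C).derivSeries n fun _ => y)
      = p n fun _ => y := by
    intro n
    rw [ContinuousLinearMap.apply_apply, apply_eq_pow_smul_coeff, apply_eq_pow_smul_coeff,
      FunLike.coe_smul, Pi.smul_apply, derivSeries_coeff_one, antideriv, coeff_ofScalars,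
      antiderivCoeff, nsmul_eq_mul]
    push_cast
    field_simp
  simp only [hterm] at hsum
  have hval := hsum.unique (p.hasSum (by simpa using hy))
  rw [ContinuousLinearMap.apply_apply] at hval
  exact hval ▸ ((p.antideriv C).hasFDerivAt_sum hq).hasDerivAt

end FormalMultilinearSeries

/- `F` and the sum of the termwise antiderivative of the power series of `f` both have derivative
`f` near `x` and agree at `x`. -/
theorem analyticAt_of_eventually_hasDerivAt {𝕜 : Type*} [RCLike 𝕜] {f F : 𝕜 → 𝕜} {x : 𝕜}
    (hf : AnalyticAt 𝕜 f x) (hF : ∀ᶠ y in 𝓝 x, HasDerivAt F (f y) y) : AnalyticAt 𝕜 F x := by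
  obtain ⟨p, r, hp⟩ := hf
  set q := p.antideriv (F x)
  have hqr : r ≤ q.radius := hp.r_le.trans (p.radius_le_radius_antideriv _)
  have hG : HasFPowerSeriesOnBall (fun z => q.sum (z - x)) q x r := by
    simpa using ((q.hasFPowerSeriesOnBall (hp.r_pos.trans_le hqr)).mono hp.r_pos hqr).comp_sub x
  have hG' : ∀ y ∈ Metric.eball x r, HasDerivAt (fun z => q.sum (z - x)) (f y) y := by
    intro y hy
    have hy' : y - x ∈ Metric.eball (0 : 𝕜) r := by
      simpa [edist_eq_enorm_sub] using hy
    have hd := (p.hasDerivAt_sum_antideriv (F x)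
      ((by simpa using hy' : ‖y - x‖ₑ < r).trans_le hp.r_le)).comp_sub_const y x
    simpa [← hp.sum hy'] using hd
  obtain ⟨ε, hε, hball⟩ := Metric.eventually_nhds_iff_ball.mp
    (hF.and (Metric.eball_mem_nhds x hp.r_pos))
  refine hG.analyticAt.congr (Filter.mem_of_superset (Metric.ball_mem_nhds x hε) ?_)
  refine Metric.isOpen_ball.eqOn_of_deriv_eq (convex_ball x ε).isPreconnected ?_ ?_ ?_
    (Metric.mem_ball_self hε) (by simp [q, FormalMultilinearSeries.sum_antideriv_zero])
  · exact fun y hy => (hG' y (hball y hy).2).differentiableAt.differentiableWithinAt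
  · exact fun y hy => (hball y hy).1.differentiableAt.differentiableWithinAt
  · exact fun y hy => (hG' y (hball y hy).2).deriv.trans (hball y hy).1.deriv.symm

section Primitive

variable {f : ℝ → ℝ} {a c x₀ t : ℝ}

theorem hasDerivAt_integral_of_continuousOn_Ioo (hf : ContinuousOn f (Ioo a c))
    (hx₀ : x₀ ∈ Ioo a c) (ht : t ∈ Ioo a c) :
    HasDerivAt (fun u => ∫ w in x₀..u, f w) (f t) t :=
  intervalIntegral.integral_hasDerivAt_right
    (hf.mono (ordConnected_Ioo.uIcc_subset hx₀ ht)).intervalIntegrable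
    (hf.stronglyMeasurableAtFilter isOpen_Ioo t ht) (hf.continuousAt (isOpen_Ioo.mem_nhds ht))

theorem continuousOn_integral_of_continuousOn_Ioo (hf : ContinuousOn f (Ioo a c))
    (hx₀ : x₀ ∈ Ioo a c) : ContinuousOn (fun u => ∫ w in x₀..u, f w) (Ioo a c) :=
  fun _ ht => (hasDerivAt_integral_of_continuousOn_Ioo hf hx₀ ht).continuousAt.continuousWithinAt

theorem AnalyticOnNhd.integral_Ioo (hf : AnalyticOnNhd ℝ f (Ioo a c)) (hx₀ : x₀ ∈ Ioo a c) :
    AnalyticOnNhd ℝ (fun u => ∫ w in x₀..u, f w) (Ioo a c) := fun _ ht =>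
  analyticAt_of_eventually_hasDerivAt (hf _ ht) <| eventually_of_mem (isOpen_Ioo.mem_nhds ht)
    fun _ hs => hasDerivAt_integral_of_continuousOn_Ioo hf.continuousOn hx₀ hs

noncomputable def doublePrimitive (x₀ : ℝ) (f : ℝ → ℝ) (t : ℝ) : ℝ :=
  ∫ u in x₀..t, ∫ w in x₀..u, f w

theorem hasDerivAt_doublePrimitive (hf : ContinuousOn f (Ioo a c)) (hx₀ : x₀ ∈ Ioo a c)
    (ht : t ∈ Ioo a c) : HasDerivAt (doublePrimitive x₀ f) (∫ w in x₀..t, f w) t :=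
  hasDerivAt_integral_of_continuousOn_Ioo (continuousOn_integral_of_continuousOn_Ioo hf hx₀) hx₀ ht

theorem AnalyticOnNhd.doublePrimitive (hf : AnalyticOnNhd ℝ f (Ioo a c)) (hx₀ : x₀ ∈ Ioo a c) :
    AnalyticOnNhd ℝ (doublePrimitive x₀ f) (Ioo a c) :=
  (hf.integral_Ioo hx₀).integral_Ioo hx₀

theorem doublePrimitive_pos (hf : ContinuousOn f (Ioo a c)) (hx₀ : x₀ ∈ Ioo a c)
    (ht : t ∈ Ioo a c) (hx₀t : x₀ < t) (hpos : ∀ u ∈ Ioo x₀ t, 0 < f u) :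
    0 < doublePrimitive x₀ f t := by
  have hsub : uIcc x₀ t ⊆ Ioo a c := ordConnected_Ioo.uIcc_subset hx₀ ht
  refine intervalIntegral.intervalIntegral_pos_of_pos_on
    ((continuousOn_integral_of_continuousOn_Ioo hf hx₀).mono hsub).intervalIntegrable
    (fun u hu => ?_) hx₀t
  have hu' : u ∈ Ioo a c := hsub (uIcc_of_le hx₀t.le ▸ Ioo_subset_Icc_self hu)
  exact intervalIntegral.intervalIntegral_pos_of_pos_on
    (hf.mono (ordConnected_Ioo.uIcc_subset hx₀ hu')).intervalIntegrable
    (fun w hw => hpos w ⟨hw.1, hw.2.trans hu.2⟩) hu.1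

end Primitive

theorem eqOn_Icc_of_iteratedDerivWithin_two_eq {v w : ℝ → ℝ} {α β : ℝ} (hαβ : α < β)
    (hv : ContDiffOn ℝ 2 v (Icc α β)) (hw : ContDiffOn ℝ 2 w (Icc α β))
    (h₂ : EqOn (iteratedDerivWithin 2 v (Icc α β)) (iteratedDerivWithin 2 w (Icc α β)) (Icc α β))
    (h₀ : v α = w α) (h₁ : derivWithin v (Icc α β) α = derivWithin w (Icc α β) α) :
    EqOn v w (Icc α β) := by
  have hu := uniqueDiffOn_Icc hαβ
  have hderiv : EqOn (derivWithin v (Icc α β)) (derivWithin w (Icc α β)) (Icc α β) := by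
    refine eq_of_derivWithin_eq ((hv.derivWithin hu le_rfl).differentiableOn one_ne_zero)
      ((hw.derivWithin hu le_rfl).differentiableOn one_ne_zero) (fun x hx => ?_) h₁
    simpa only [iteratedDerivWithin_succ, iteratedDerivWithin_zero] using
      h₂ (Ico_subset_Icc_self hx)
  exact eq_of_derivWithin_eq (hv.differentiableOn two_ne_zero) (hw.differentiableOn two_ne_zero)
    (hderiv.mono Ico_subset_Icc_self) h₀

section MomentumProfile

variable {a c b σ t : ℝ} {Q R φ : ℝ → ℝ}

/-- The product `φ Q` of the solution: `(φQ)″ = 2Q(R - σ)` integrated twice from `-b`, with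
`(φQ)(-b) = 0` and `(φQ)′(-b) = 2Q(-b)`. -/
noncomputable def weightedProfile (b : ℝ) (Q R : ℝ → ℝ) (σ t : ℝ) : ℝ :=
  2 * Q (-b) * (t + b) + doublePrimitive (-b) (fun w => 2 * Q w * R w) t -
    σ * doublePrimitive (-b) (fun w => 2 * Q w) t

/-- The `σ` for which `weightedProfile b Q R σ` vanishes at `b`. -/
noncomputable def cscKConstant (b : ℝ) (Q R : ℝ → ℝ) : ℝ :=
  (4 * b * Q (-b) + doublePrimitive (-b) (fun w => 2 * Q w * R w) b) /
    doublePrimitive (-b) (fun w => 2 * Q w) b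

def IsCscKProfile (b : ℝ) (Q R : ℝ → ℝ) (σ : ℝ) (φ : ℝ → ℝ) : Prop :=
  ContDiffOn ℝ 2 φ (Icc (-b) b) ∧
    (∀ τ ∈ Icc (-b) b,
      R τ - (1 / (2 * Q τ)) * iteratedDerivWithin 2 (fun t => φ t * Q t) (Icc (-b) b) τ = σ) ∧
    φ (-b) = 0 ∧ derivWithin φ (Icc (-b) b) (-b) = 2 ∧ φ b = 0

theorem cscK_equation_iff {q r x : ℝ} (hq : q ≠ 0) :
    r - 1 / (2 * q) * x = σ ↔ x = 2 * q * (r - σ) := by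
  constructor <;> intro h
  · field_simp at h; linear_combination -h
  · rw [h]; field_simp; ring

theorem weightedProfile_neg_self : weightedProfile b Q R σ (-b) = 0 := by
  simp [weightedProfile, doublePrimitive]

theorem analyticOnNhd_weightedProfile (hQ : AnalyticOnNhd ℝ Q (Ioo a c))
    (hR : AnalyticOnNhd ℝ R (Ioo a c)) (hb : -b ∈ Ioo a c) :
    AnalyticOnNhd ℝ (weightedProfile b Q R σ) (Ioo a c) := by
  have hg : AnalyticOnNhd ℝ (fun w => 2 * Q w) (Ioo a c) := analyticOnNhd_const.mul hQ
  have hh : AnalyticOnNhd ℝ (fun w => 2 * Q w * R w) (Ioo a c) := hg.mul hR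
  exact ((analyticOnNhd_const.mul (analyticOnNhd_id.add analyticOnNhd_const)).add
    (hh.doublePrimitive hb)).sub (analyticOnNhd_const.mul (hg.doublePrimitive hb))

theorem hasDerivAt_weightedProfile (hQ : ContinuousOn Q (Ioo a c))
    (hR : ContinuousOn R (Ioo a c)) (hb : -b ∈ Ioo a c) (ht : t ∈ Ioo a c) :
    HasDerivAt (weightedProfile b Q R σ)
      (2 * Q (-b) + (∫ w in (-b)..t, 2 * Q w * R w) - σ * ∫ w in (-b)..t, 2 * Q w) t := by
  have hg : ContinuousOn (fun w => 2 * Q w) (Ioo a c) := continuousOn_const.mul hQ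
  have hlin : HasDerivAt (fun t => 2 * Q (-b) * (t + b)) (2 * Q (-b)) t := by
    simpa using ((hasDerivAt_id t).add_const b).const_mul (2 * Q (-b))
  exact (hlin.add (hasDerivAt_doublePrimitive (hg.mul hR) hb ht)).sub
    ((hasDerivAt_doublePrimitive hg hb ht).const_mul σ)

theorem iteratedDeriv_two_weightedProfile (hQ : ContinuousOn Q (Ioo a c))
    (hR : ContinuousOn R (Ioo a c)) (hb : -b ∈ Ioo a c) (ht : t ∈ Ioo a c) :
    iteratedDeriv 2 (weightedProfile b Q R σ) t = 2 * Q t * (R t - σ) := by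
  have hderiv : deriv (weightedProfile b Q R σ) =ᶠ[𝓝 t] fun s =>
      2 * Q (-b) + (∫ w in (-b)..s, 2 * Q w * R w) - σ * ∫ w in (-b)..s, 2 * Q w :=
    eventually_of_mem (isOpen_Ioo.mem_nhds ht) fun s hs =>
      (hasDerivAt_weightedProfile hQ hR hb hs).deriv
  have hg : ContinuousOn (fun w => 2 * Q w) (Ioo a c) := continuousOn_const.mul hQ
  have hh : ContinuousOn (fun w => 2 * Q w * R w) (Ioo a c) := hg.mul hR
  have hderiv₂ : HasDerivAt (fun s =>
      2 * Q (-b) + (∫ w in (-b)..s, 2 * Q w * R w) - σ * ∫ w in (-b)..s, 2 * Q w)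
      (2 * Q t * R t - σ * (2 * Q t)) t :=
    ((hasDerivAt_integral_of_continuousOn_Ioo hh hb ht).const_add _).sub
      ((hasDerivAt_integral_of_continuousOn_Ioo hg hb ht).const_mul σ)
  rw [iteratedDeriv_succ, iteratedDeriv_one, hderiv.deriv_eq, hderiv₂.deriv]
  ring

theorem iteratedDerivWithin_two_weightedProfile (hb : 0 < b) (ha : a < -b) (hc : b < c)
    (hQ : AnalyticOnNhd ℝ Q (Ioo a c)) (hR : AnalyticOnNhd ℝ R (Ioo a c))
    (ht : t ∈ Icc (-b) b) :
    iteratedDerivWithin 2 (weightedProfile b Q R σ) (Icc (-b) b) t = 2 * Q t * (R t - σ) := by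
  have hK : Icc (-b) b ⊆ Ioo a c := Icc_subset_Ioo ha hc
  have hb' : -b ∈ Ioo a c := hK (left_mem_Icc.2 (by linarith))
  rw [iteratedDerivWithin_eq_iteratedDeriv (uniqueDiffOn_Icc (by linarith))
    (analyticOnNhd_weightedProfile hQ hR hb' t (hK ht)).contDiffAt ht,
    iteratedDeriv_two_weightedProfile hQ.continuousOn hR.continuousOn hb' (hK ht)]

theorem weightedProfile_eq_zero_iff (hb : 0 < b) (ha : a < -b) (hc : b < c)
    (hQ : ContinuousOn Q (Ioo a c)) (hQpos : ∀ τ ∈ Icc (-b) b, 0 < Q τ) :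
    weightedProfile b Q R σ b = 0 ↔ σ = cscKConstant b Q R := by
  have hpos : 0 < doublePrimitive (-b) (fun w => 2 * Q w) b :=
    doublePrimitive_pos (continuousOn_const.mul hQ) ⟨ha, by linarith⟩ ⟨by linarith, hc⟩
      (by linarith) fun u hu => mul_pos two_pos (hQpos u (Ioo_subset_Icc_self hu))
  rw [weightedProfile, cscKConstant, eq_div_iff hpos.ne']
  constructor <;> intro h <;> linear_combination -h

theorem analyticOnNhd_weightedProfile_div (hb : 0 < b) (ha : a < -b) (hc : b < c)
    (hQ : AnalyticOnNhd ℝ Q (Ioo a c)) (hR : AnalyticOnNhd ℝ R (Ioo a c))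
    (hQpos : ∀ τ ∈ Icc (-b) b, 0 < Q τ) :
    AnalyticOnNhd ℝ (fun t => weightedProfile b Q R σ t / Q t) (Icc (-b) b) := by
  have hK : Icc (-b) b ⊆ Ioo a c := Icc_subset_Ioo ha hc
  have hb' : -b ∈ Ioo a c := hK (left_mem_Icc.2 (by linarith))
  exact fun t ht =>
    (analyticOnNhd_weightedProfile hQ hR hb' t (hK ht)).div (hQ t (hK ht)) (hQpos t ht).ne'

theorem isCscKProfile_weightedProfile_div (hb : 0 < b) (ha : a < -b) (hc : b < c)
    (hQ : AnalyticOnNhd ℝ Q (Ioo a c)) (hR : AnalyticOnNhd ℝ R (Ioo a c))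
    (hQpos : ∀ τ ∈ Icc (-b) b, 0 < Q τ) :
    IsCscKProfile b Q R (cscKConstant b Q R)
      (fun t => weightedProfile b Q R (cscKConstant b Q R) t / Q t) := by
  have hK : Icc (-b) b ⊆ Ioo a c := Icc_subset_Ioo ha hc
  have hbK : -b ∈ Icc (-b) b := left_mem_Icc.2 (by linarith)
  have hu : UniqueDiffOn ℝ (Icc (-b) b) := uniqueDiffOn_Icc (by linarith)
  refine ⟨(analyticOnNhd_weightedProfile_div hb ha hc hQ hR hQpos).contDiffOn hu,
    fun τ hτ => ?_, by simp [weightedProfile_neg_self], ?_, by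
      simp [(weightedProfile_eq_zero_iff hb ha hc hQ.continuousOn hQpos).2 rfl]⟩
  · rw [cscK_equation_iff (hQpos τ hτ).ne',
      iteratedDerivWithin_congr (fun t ht => div_mul_cancel₀ _ (hQpos t ht).ne') hτ,
      iteratedDerivWithin_two_weightedProfile hb ha hc hQ hR hτ]
  · have hQb : Q (-b) ≠ 0 := (hQpos _ hbK).ne'
    have hderiv : HasDerivAt (fun t => weightedProfile b Q R (cscKConstant b Q R) t / Q t) _
        (-b) := (hasDerivAt_weightedProfile hQ.continuousOn hR.continuousOn (hK hbK)
          (hK hbK)).div (hQ _ (hK hbK)).differentiableAt.hasDerivAt hQb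
    rw [hderiv.hasDerivWithinAt.derivWithin (hu _ hbK)]
    simp only [intervalIntegral.integral_same, add_zero, mul_zero, sub_zero,
      weightedProfile_neg_self, zero_mul]
    field_simp

theorem IsCscKProfile.mul_eqOn_weightedProfile (hb : 0 < b) (ha : a < -b) (hc : b < c)
    (hQ : AnalyticOnNhd ℝ Q (Ioo a c)) (hR : AnalyticOnNhd ℝ R (Ioo a c))
    (hQpos : ∀ τ ∈ Icc (-b) b, 0 < Q τ) (hφ : IsCscKProfile b Q R σ φ) :
    EqOn (fun t => φ t * Q t) (weightedProfile b Q R σ) (Icc (-b) b) := by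
  obtain ⟨hφ₂, heq, h₀, h₁, -⟩ := hφ
  have hK : Icc (-b) b ⊆ Ioo a c := Icc_subset_Ioo ha hc
  have hbK : -b ∈ Icc (-b) b := left_mem_Icc.2 (by linarith)
  have hu : UniqueDiffOn ℝ (Icc (-b) b) := uniqueDiffOn_Icc (by linarith)
  have hQ₂ : ContDiffOn ℝ 2 Q (Icc (-b) b) := (hQ.mono hK).contDiffOn hu
  refine eqOn_Icc_of_iteratedDerivWithin_two_eq (by linarith) (hφ₂.mul hQ₂)
    ((analyticOnNhd_weightedProfile hQ hR (hK hbK)).mono hK |>.contDiffOn hu)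
    (fun τ hτ => ?_) (by simp [h₀, weightedProfile_neg_self]) ?_
  · rw [(cscK_equation_iff (hQpos τ hτ).ne').1 (heq τ hτ),
      iteratedDerivWithin_two_weightedProfile hb ha hc hQ hR hτ]
  · rw [derivWithin_fun_mul (hφ₂.differentiableOn two_ne_zero _ hbK)
      (hQ₂.differentiableOn two_ne_zero _ hbK), h₀, h₁,
      (hasDerivAt_weightedProfile hQ.continuousOn hR.continuousOn (hK hbK)
        (hK hbK)).hasDerivWithinAt.derivWithin (hu _ hbK)]
    simp

theorem IsCscKProfile.eq_cscKConstant (hb : 0 < b) (ha : a < -b) (hc : b < c)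
    (hQ : AnalyticOnNhd ℝ Q (Ioo a c)) (hR : AnalyticOnNhd ℝ R (Ioo a c))
    (hQpos : ∀ τ ∈ Icc (-b) b, 0 < Q τ) (hφ : IsCscKProfile b Q R σ φ) :
    σ = cscKConstant b Q R := by
  have hbK : b ∈ Icc (-b) b := right_mem_Icc.2 (by linarith)
  have hψ : φ b * Q b = _ := hφ.mul_eqOn_weightedProfile hb ha hc hQ hR hQpos hbK
  rw [hφ.2.2.2.2, zero_mul] at hψ
  exact (weightedProfile_eq_zero_iff hb ha hc hQ.continuousOn hQpos).1 hψ.symm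

theorem IsCscKProfile.eqOn_weightedProfile_div (hb : 0 < b) (ha : a < -b) (hc : b < c)
    (hQ : AnalyticOnNhd ℝ Q (Ioo a c)) (hR : AnalyticOnNhd ℝ R (Ioo a c))
    (hQpos : ∀ τ ∈ Icc (-b) b, 0 < Q τ) (hφ : IsCscKProfile b Q R σ φ) :
    EqOn φ (fun t => weightedProfile b Q R σ t / Q t) (Icc (-b) b) := fun t ht =>
  eq_div_of_mul_eq (hQpos t ht).ne' (hφ.mul_eqOn_weightedProfile hb ha hc hQ hR hQpos ht)

end MomentumProfile

/-- Existence and uniqueness of constant scalar curvature momentum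
profiles: there is exactly one pair `(σ, φ)` (with `φ` twice continuously differentiable on
`[−b,b]`, and unique as a function on `[−b,b]`) solving the cscK equation
`R − (φQ)″/(2Q) = σ` on `[−b,b]` with boundary conditions `φ(−b) = 0`, `φ′(−b) = 2`,
`φ(b) = 0`; moreover this `φ` is real-analytic on a neighbourhood of `[−b,b]`. -/
theorem momentum_cscK_exists_unique (b : ℝ) (hb : 0 < b) (a c : ℝ)
    (ha : a < -b) (hc : b < c) (Q R : ℝ → ℝ)
    (hQ : AnalyticOnNhd ℝ Q (Set.Ioo a c)) (hR : AnalyticOnNhd ℝ R (Set.Ioo a c))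
    (hQpos : ∀ τ ∈ Set.Icc (-b) b, 0 < Q τ) :
    ∃ σ : ℝ, ∃ φ : ℝ → ℝ,
      (ContDiffOn ℝ 2 φ (Set.Icc (-b) b) ∧
        (∀ τ ∈ Set.Icc (-b) b,
          R τ - (1 / (2 * Q τ)) *
            iteratedDerivWithin 2 (fun t => φ t * Q t) (Set.Icc (-b) b) τ = σ) ∧
        φ (-b) = 0 ∧ derivWithin φ (Set.Icc (-b) b) (-b) = 2 ∧ φ b = 0) ∧
      (∀ σ' : ℝ, ∀ φ' : ℝ → ℝ,
        (ContDiffOn ℝ 2 φ' (Set.Icc (-b) b) ∧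
          (∀ τ ∈ Set.Icc (-b) b,
            R τ - (1 / (2 * Q τ)) *
              iteratedDerivWithin 2 (fun t => φ' t * Q t) (Set.Icc (-b) b) τ = σ') ∧
          φ' (-b) = 0 ∧ derivWithin φ' (Set.Icc (-b) b) (-b) = 2 ∧ φ' b = 0) →
        σ' = σ ∧ Set.EqOn φ' φ (Set.Icc (-b) b)) ∧
      AnalyticOnNhd ℝ φ (Set.Icc (-b) b) := by
  refine ⟨cscKConstant b Q R, fun t => weightedProfile b Q R (cscKConstant b Q R) t / Q t,
    isCscKProfile_weightedProfile_div hb ha hc hQ hR hQpos,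
    fun σ' φ' (hφ' : IsCscKProfile b Q R σ' φ') => ?_,
    analyticOnNhd_weightedProfile_div hb ha hc hQ hR hQpos⟩
  obtain rfl := hφ'.eq_cscKConstant hb ha hc hQ hR hQpos
  exact ⟨rfl, hφ'.eqOn_weightedProfile_div hb ha hc hQ hR hQpos⟩
end
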